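/- arXiv:0903.1705 — 2 statements merged into one kernel-verified Lean document; each statement's English description precedes it below -/
import Mathlib

section
/- Let A be a graded-commutative dga over ℚ, let a, b ∈ A¹ be cocycles, and let T, S ∈ A¹ satisfy d(T) = a·b and d(S) = T·b. Then the family a₁₂ = T, a₂₃ = 0, a₃₄ = −T, a₁₃ = S, a₂₄ = S is a defining system for the 4-fold Massey product ⟨[a],[b],[b],[a]⟩, and its associated representative ā₁₃·a + ā₁₂·a₃₄ + ā·a₂₄ = S·a − T·T + a·S equals 0. (This expresses that the Massey product ⟨a, 1−a, 1−a, a⟩ is trivially zero.) -/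
/-! The graded commutativity sign `(-1)^{1·1} = -1` makes degree-one elements anticommute, and
over `ℚ` an element equal to its own negative vanishes, so degree-one elements square to zero.
Hence `S·a + a·S = 0` and `T·T = 0`, which kills the representative; the defining-system equations
are `d T = a·b` and `d S = T·b` rewritten by the same anticommutation. -/

section GradedComm

variable {R A : Type*} [CommSemiring R] [Ring A] [Module R A]

def IsGradedComm (deg : ℤ → Submodule R A) : Prop :=
  ∀ (p q : ℤ) (x y : A), x ∈ deg p → y ∈ deg q → x * y = (Int.negOnePow (p * q) : ℤ) • (y * x)

variable {deg : ℤ → Submodule R A}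

theorem IsGradedComm.mul_eq_neg_mul_of_odd (hcomm : IsGradedComm deg) {p q : ℤ} {x y : A}
    (hx : x ∈ deg p) (hy : y ∈ deg q) (hp : Odd p) (hq : Odd q) : x * y = -(y * x) := by
  rw [hcomm p q x y hx hy, Int.negOnePow_odd _ (Int.odd_mul.mpr ⟨hp, hq⟩)]
  simp

theorem IsGradedComm.mul_self_eq_zero_of_odd [IsAddTorsionFree A] (hcomm : IsGradedComm deg)
    {p : ℤ} {x : A} (hx : x ∈ deg p) (hp : Odd p) : x * x = 0 :=
  self_eq_neg.mp (hcomm.mul_eq_neg_mul_of_odd hx hx hp hp)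

end GradedComm

theorem massey_abba_trivially_zero_general
    (A : Type*) [Ring A] [Algebra ℚ A]
    (deg : ℤ → Submodule ℚ A)
    (d : A →ₗ[ℚ] A)
    (hcomm : ∀ (p q : ℤ) (x y : A), x ∈ deg p → y ∈ deg q →
      x * y = (Int.negOnePow (p * q) : ℤ) • (y * x))
    (a b T S : A)
    (ha : a ∈ deg 1) (hb : b ∈ deg 1) (hT : T ∈ deg 1) (hS : S ∈ deg 1)
    (hdT : d T = a * b) (hdS : d S = T * b) :
    -- defining system conditions
    d (0 : A) = b * b ∧
    d (-T) = b * a ∧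
    d S = T * b + a * (0 : A) ∧
    d S = b * (-T) + (0 : A) * a ∧
    -- the associated representative vanishes
    S * a + T * (-T) + a * S = 0 := by
  have : IsAddTorsionFree A := .of_module_rat A
  have hcomm : IsGradedComm deg := hcomm
  have anticomm {x y : A} (hx : x ∈ deg 1) (hy : y ∈ deg 1) : x * y = -(y * x) :=
    hcomm.mul_eq_neg_mul_of_odd hx hy odd_one odd_one
  refine ⟨?_, ?_, ?_, ?_, ?_⟩
  · rw [map_zero, hcomm.mul_self_eq_zero_of_odd hb odd_one]
  · rw [map_neg, hdT, anticomm ha hb, neg_neg]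
  · rw [hdS, mul_zero, add_zero]
  · rw [hdS, anticomm hT hb, zero_mul, add_zero, mul_neg]
  · rw [anticomm hS ha, mul_neg, hcomm.mul_self_eq_zero_of_odd hT odd_one, neg_zero, add_zero,
      neg_add_cancel]

/-- Let `A` be a graded-commutative dga over `ℚ`, `a, b ∈ A¹` cocycles,
and `T, S ∈ A¹` with `d T = a·b` and `d S = T·b`.  Then the family
`a₁₂ = T, a₂₃ = 0, a₃₄ = -T, a₁₃ = S, a₂₄ = S` is a defining system for the 4-fold Massey
product `⟨[a],[b],[b],[a]⟩` (in particular `d a₂₃ = b̄·b = 0`, `d a₃₄ = b̄·a`,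
`d a₁₃ = ā₁₂·b + ā·a₂₃ = T·b`, `d a₂₄ = b̄·a₃₄ + ā₂₃·a = b·(-T) + 0·a`), and its
associated representative `ā₁₃·a + ā₁₂·a₃₄ + ā·a₂₄ = S·a - T·T + a·S` equals `0`.
(The Massey product `⟨a, 1-a, 1-a, a⟩` is trivially zero.) -/
theorem massey_abba_trivially_zero
    (A : Type*) [Ring A] [Algebra ℚ A]
    (deg : ℤ → Submodule ℚ A) [GradedAlgebra deg]
    (d : A →ₗ[ℚ] A)
    (hd_mem : ∀ (p : ℤ) (x : A), x ∈ deg p → d x ∈ deg (p + 1))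
    (hd_sq : ∀ x : A, d (d x) = 0)
    (hleibniz : ∀ (p : ℤ) (x y : A), x ∈ deg p →
      d (x * y) = d x * y + (Int.negOnePow p : ℤ) • (x * d y))
    (hcomm : ∀ (p q : ℤ) (x y : A), x ∈ deg p → y ∈ deg q →
      x * y = (Int.negOnePow (p * q) : ℤ) • (y * x))
    (a b T S : A)
    (ha : a ∈ deg 1) (hb : b ∈ deg 1) (hT : T ∈ deg 1) (hS : S ∈ deg 1)
    (hca : d a = 0) (hcb : d b = 0)
    (hdT : d T = a * b) (hdS : d S = T * b) :
    -- defining system conditions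
    d (0 : A) = b * b ∧
    d (-T) = b * a ∧
    d S = T * b + a * (0 : A) ∧
    d S = b * (-T) + (0 : A) * a ∧
    -- the associated representative vanishes
    S * a + T * (-T) + a * S = 0 :=
  massey_abba_trivially_zero_general A deg d hcomm a b T S ha hb hT hS hdT hdS
end

section
/- Let A be a graded-commutative dga over ℚ, let α, α', β, β' ∈ A¹ be cocycles, and let T_a, T_b ∈ A¹ satisfy d(T_a) = α·α' and d(T_b) = β·β'. Let N be the 7×7 strictly upper-triangular matrix over A whose only nonzero entries are: N₁₂ = β − α, N₁₃ = β' − α', N₁₅ = T_b − T_a, N₁₆ = T_a − T_b, N₂₄ = α − β, N₂₅ = −β', N₂₆ = α', N₃₅ = α, N₃₆ = −β, N₃₇ = α' − β'. Then d(N) + N·N = 0, where d is applied entrywise and N·N is the matrix product over A; that is, for all 1 ≤ i, j ≤ 7 one has d(N_{ij}) + Σ_{k=1}^{7} N_{ik}·N_{kj} = 0. (With α = [a], α' = [1−a], β = [b], β' = [1−b] and T_a, T_b Totaro cycles bounding the Steinberg products, this says that the matrix of Figure 2 defines a square-zero differential on the minimal cell module A ⊕ A(−1)² ⊕ A(−2)⁴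 for n = 2.) -/
/-!
Since `α, α', β, β'` are cocycles, `d N` is supported on the entries `(1,5)` and `(1,6)`, where it
is `±(ββ' - αα')`, while `N * N` is supported on the first row. There the entries
`(1,4) = -(α - β)²` and `(1,7) = -(α' - β')²` vanish because degree-one elements square to zero,
and anticommutativity of degree-one elements turns the entries `(1,5)` and `(1,6)` into
`αα' - ββ'` and `ββ' - αα'`.
-/

/-- The 7×7 strictly upper-triangular matrix of Figure 2: its only nonzero entries are
`N₁₂ = β-α`, `N₁₃ = β'-α'`, `N₁₅ = T_b-T_a`, `N₁₆ = T_a-T_b`, `N₂₄ = α-β`, `N₂₅ = -β'`,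
`N₂₆ = α'`, `N₃₅ = α`, `N₃₆ = -β`, `N₃₇ = α'-β'` (1-based indexing). -/
def figureTwoMatrix {A : Type*} [Ring A] (α α' β β' Ta Tb : A) : Matrix (Fin 7) (Fin 7) A :=
  !![0, β - α, β' - α', 0,     Tb - Ta, Ta - Tb, 0;
     0, 0,     0,       α - β, -β',     α',      0;
     0, 0,     0,       0,     α,       -β,      α' - β';
     0, 0,     0,       0,     0,       0,       0;
     0, 0,     0,       0,     0,       0,       0;
     0, 0,     0,       0,     0,       0,       0;
     0, 0,     0,       0,     0,       0,       0]

theorem figureTwoMatrix_maurerCartan {A F : Type*} [Ring A] [FunLike F A A]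
    [AddMonoidHomClass F A A] (V : Set A) (hanti : ∀ x ∈ V, ∀ y ∈ V, x * y = -(y * x))
    (hsq : ∀ x ∈ V, x * x = 0) (d : F) {α α' β β' Ta Tb : A}
    (hα : α ∈ V) (hα' : α' ∈ V) (hβ : β ∈ V) (hβ' : β' ∈ V)
    (hcα : d α = 0) (hcα' : d α' = 0) (hcβ : d β = 0) (hcβ' : d β' = 0)
    (hdTa : d Ta = α * α') (hdTb : d Tb = β * β') (i j : Fin 7) :
    d (figureTwoMatrix α α' β β' Ta Tb i j) +
      (figureTwoMatrix α α' β β' Ta Tb * figureTwoMatrix α α' β β' Ta Tb) i j = 0 := by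
  fin_cases i <;> fin_cases j <;>
    simp [figureTwoMatrix, Matrix.mul_apply, Fin.sum_univ_succ, sub_mul, mul_sub,
      hsq α hα, hsq α' hα', hsq β hβ, hsq β' hβ', hanti β' hβ' α hα, hanti α' hα' α hα,
      hanti α' hα' β hβ, hanti β hβ α hα, hanti β' hβ' α' hα', hanti β' hβ' β hβ,
      hcα, hcα', hcβ, hcβ', hdTa, hdTb] <;>
    abel

theorem minimal_module_differential_squares_to_zero_general
    (A : Type*) [Ring A] [Algebra ℚ A]
    (deg : ℤ → Submodule ℚ A)
    (d : A →ₗ[ℚ] A)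
    (hcomm : ∀ (p q : ℤ) (x y : A), x ∈ deg p → y ∈ deg q →
      x * y = (Int.negOnePow (p * q) : ℤ) • (y * x))
    (α α' β β' Ta Tb : A)
    (hα : α ∈ deg 1) (hα' : α' ∈ deg 1) (hβ : β ∈ deg 1) (hβ' : β' ∈ deg 1)
    (hcα : d α = 0) (hcα' : d α' = 0) (hcβ : d β = 0) (hcβ' : d β' = 0)
    (hdTa : d Ta = α * α') (hdTb : d Tb = β * β') :
    ∀ i j : Fin 7,
      d (figureTwoMatrix α α' β β' Ta Tb i j) +
        ∑ l : Fin 7,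
          figureTwoMatrix α α' β β' Ta Tb i l * figureTwoMatrix α α' β β' Ta Tb l j = 0 := by
  have hanti : ∀ x ∈ deg 1, ∀ y ∈ deg 1, x * y = -(y * x) := fun x hx y hy => by
    simpa using hcomm 1 1 x y hx hy
  have : IsAddTorsionFree A := .of_module_rat A
  have hsq : ∀ x ∈ deg 1, x * x = 0 := fun x hx => self_eq_neg.mp (hanti x hx x hx)
  intro i j
  simpa only [Matrix.mul_apply] using figureTwoMatrix_maurerCartan (deg 1 : Set A)
    hanti hsq d hα hα' hβ hβ' hcα hcα' hcβ hcβ' hdTa hdTb i j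

/-- Let `A` be a graded-commutative dga over `ℚ`, `α, α', β, β' ∈ A¹`
cocycles, and `T_a, T_b ∈ A¹` with `d T_a = α·α'` and `d T_b = β·β'`.  Let `N` be the
7×7 strictly upper-triangular matrix of Figure 2.  Then `d N + N·N = 0`, where `d` is
applied entrywise and `N·N` is the matrix product over `A`: for all `i, j` one has
`d N_{ij} + Σ_l N_{il}·N_{lj} = 0`.  (With `α = [a]`, `α' = [1-a]`, `β = [b]`,
`β' = [1-b]` and `T_a, T_b` Totaro cycles bounding the Steinberg products, the matrix of
Figure 2 defines a square-zero differential on the minimal cell module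
`A ⊕ A(-1)² ⊕ A(-2)⁴` for `n = 2`.) -/
theorem minimal_module_differential_squares_to_zero
    (A : Type*) [Ring A] [Algebra ℚ A]
    (deg : ℤ → Submodule ℚ A) [GradedAlgebra deg]
    (d : A →ₗ[ℚ] A)
    (hd_mem : ∀ (p : ℤ) (x : A), x ∈ deg p → d x ∈ deg (p + 1))
    (hd_sq : ∀ x : A, d (d x) = 0)
    (hleibniz : ∀ (p : ℤ) (x y : A), x ∈ deg p →
      d (x * y) = d x * y + (Int.negOnePow p : ℤ) • (x * d y))
    (hcomm : ∀ (p q : ℤ) (x y : A), x ∈ deg p → y ∈ deg q →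
      x * y = (Int.negOnePow (p * q) : ℤ) • (y * x))
    (α α' β β' Ta Tb : A)
    (hα : α ∈ deg 1) (hα' : α' ∈ deg 1) (hβ : β ∈ deg 1) (hβ' : β' ∈ deg 1)
    (hTa : Ta ∈ deg 1) (hTb : Tb ∈ deg 1)
    (hcα : d α = 0) (hcα' : d α' = 0) (hcβ : d β = 0) (hcβ' : d β' = 0)
    (hdTa : d Ta = α * α') (hdTb : d Tb = β * β') :
    ∀ i j : Fin 7,
      d (figureTwoMatrix α α' β β' Ta Tb i j) +
        ∑ l : Fin 7,
          figureTwoMatrix α α' β β' Ta Tb i l * figureTwoMatrix α α' β β' Ta Tb l j = 0 :=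
  minimal_module_differential_squares_to_zero_general A deg d hcomm α α' β β' Ta Tb hα hα' hβ hβ'
    hcα hcα' hcβ hcβ' hdTa hdTb
end
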